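/- Let ω = (ω₀, …, ω_{n+1}) be a key sequence, θ ∈ (ℂ*)ⁿ, and g₀, …, g_{n+1} the associated key forms. If every key form g_j (0 ≤ j ≤ n+1) lies in the polynomial ring ℂ[x, y] (i.e., g_j involves no negative powers of x), then 𝓑 ∩ ℂ[x,y], the set of those products in 𝓑 that lie in ℂ[x,y], is a ℂ-vector-space basis of ℂ[x,y]. -/

import Mathlib

/-- `dks ω k` is `gcd(|ω₀|, …, |ω_k|)`. -/
def dks (ω : ℕ → ℤ) (k : ℕ) : ℕ :=
  (Finset.range (k + 1)).gcd fun j => (ω j).natAbs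

/-- `alphaK ω k` is `α_k = d_{k−1}/d_k`. -/
def alphaK (ω : ℕ → ℤ) (k : ℕ) : ℕ := dks ω (k - 1) / dks ω k

/-- A key sequence `(ω₀, …, ω_{n+1})`. -/
def IsKeySequence (n : ℕ) (ω : ℕ → ℤ) : Prop :=
  1 ≤ ω 0 ∧ dks ω (n + 1) = 1 ∧
    ∀ k, 1 ≤ k → k ≤ n → ω (k + 1) < (alphaK ω k : ℤ) * ω k

/-- `β k` is, for `1 ≤ k ≤ n`, the unique representation tuple of `α_k·ω_k`:
`0 ≤ β_{k,j} < α_j` for `1 ≤ j ≤ k−1` and `α_k·ω_k = Σ_{j=0}^{k−1} β_{k,j}·ω_j`. -/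
def IsRepTuple (n : ℕ) (ω : ℕ → ℤ) (β : ℕ → ℕ → ℤ) : Prop :=
  ∀ k, 1 ≤ k → k ≤ n →
    (∀ j, 1 ≤ j → j < k → 0 ≤ β k j ∧ β k j < (alphaK ω j : ℤ)) ∧
      (alphaK ω k : ℤ) * ω k = ∑ j ∈ Finset.range k, β k j * ω j

/-- The ring `R = ℂ[x, x⁻¹, y]`, realized as polynomials in `y` over Laurent
polynomials in `x`:  `x` is `C (T 1)` and `y` is `X`. -/
abbrev RR : Type := Polynomial (LaurentPolynomial ℂ)

/-- `g 0, …, g (n+1)` are the key forms associated to the key sequence `ω`,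
`θ ∈ (ℂ*)ⁿ` and the representation tuples `β`:  `g₀ = x`, `g₁ = y` and
`g_{k+1} = g_k^{α_k} − θ_k·x^{β_{k,0}}·g₁^{β_{k,1}}⋯g_{k−1}^{β_{k,k−1}}` for `1 ≤ k ≤ n`
(the possibly negative power `g₀^{β_{k,0}}` is the Laurent monomial `T (β_{k,0})`). -/
def KeyForms (n : ℕ) (ω : ℕ → ℤ) (θ : ℕ → ℂ) (β : ℕ → ℕ → ℤ) (g : ℕ → RR) : Prop :=
  g 0 = Polynomial.C (LaurentPolynomial.T 1) ∧ g 1 = Polynomial.X ∧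
    ∀ k, 1 ≤ k → k ≤ n →
      g (k + 1) = g k ^ alphaK ω k -
        Polynomial.C (LaurentPolynomial.C (θ k) * LaurentPolynomial.T (β k 0)) *
          ∏ j ∈ Finset.Ico 1 k, g j ^ (β k j).toNat

/-- The family `𝓑`: indexed by `(β₀, (β₁,…,β_n), β_{n+1}) ∈ ℤ × ∏_j Fin α_j × ℕ`,
the element `g₀^{β₀}·g₁^{β₁}⋯g_n^{β_n}·g_{n+1}^{β_{n+1}}` of `R` (again `g₀^{β₀}` with
`β₀ ∈ ℤ` is the Laurent monomial `T β₀`). -/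
noncomputable def Bfam (n : ℕ) (ω : ℕ → ℤ) (g : ℕ → RR) :
    ℤ × ((j : Fin n) → Fin (alphaK ω ((j : ℕ) + 1))) × ℕ → RR :=
  fun p =>
    Polynomial.C (LaurentPolynomial.T p.1) *
      (∏ j : Fin n, g ((j : ℕ) + 1) ^ (p.2.1 j : ℕ)) * g (n + 1) ^ p.2.2

/-!
Over `L = ℂ[x, x⁻¹]` each key form `g_k`, `k ≥ 1`, is monic in `y` of degree `α₁ ⋯ α_{k-1}`:
inductively, in `g_{k+1} = g_k^{α_k} - …` the subtracted term has degree at most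
`∑_{1≤j<k} (α_j - 1) α₁ ⋯ α_{j-1} < α₁ ⋯ α_{k-1}`. Hence the products
`g₁^{β₁} ⋯ g_{n+1}^{β_{n+1}}` are monic, and by mixed-radix expansion their degrees run through
every natural number exactly once; so they form an `L`-basis of `L[y]`, and multiplying by the
`ℂ`-basis `(x^{β₀})` of `L` shows that `𝓑` is a `ℂ`-basis of `L[y]`. If the key forms have
coefficients in `ℂ[x]`, the same argument over `ℂ[x]` shows that the members of `𝓑` with
`β₀ ≥ 0`, which lie in `ℂ[x, y]`, span `ℂ[x, y]`.
-/

open Polynomial LaurentPolynomial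

section MonicBasis

variable {S Q : Type*} [CommRing S] [IsDomain S]

noncomputable def basisOfMonic (m : Q → S[X]) {e : Q → ℕ} (he : e.Bijective)
    (hm : ∀ q, (m q).Monic) (hdeg : ∀ q, (m q).natDegree = e q) : Module.Basis Q S S[X] :=
  let E := Equiv.ofBijective e he
  have hseq : ∀ i : ℕ, (m (E.symm i)).degree = i := fun i => by
    rw [degree_eq_natDegree (hm _).ne_zero, hdeg, ← Equiv.ofBijective_apply e he, E.apply_symm_apply]
  (Sequence.basis ⟨fun i => m (E.symm i), hseq⟩ fun i => by
    simp only [(hm _).leadingCoeff, isUnit_one]).reindex E.symm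

@[simp]
lemma basisOfMonic_apply (m : Q → S[X]) {e : Q → ℕ} (he : e.Bijective)
    (hm : ∀ q, (m q).Monic) (hdeg : ∀ q, (m q).natDegree = e q) (q : Q) :
    basisOfMonic m he hm hdeg q = m q := by
  simp [basisOfMonic]

end MonicBasis

section KeySequence

variable {n : ℕ} {ω : ℕ → ℤ}

lemma dks_pos (h0 : ω 0 ≠ 0) (k : ℕ) : 0 < dks ω k := by
  have hdvd : dks ω k ∣ (ω 0).natAbs := Finset.gcd_dvd (Finset.mem_range.mpr k.succ_pos)
  exact Nat.pos_of_dvd_of_pos hdvd (Int.natAbs_pos.mpr h0)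

lemma dks_dvd_dks_pred (k : ℕ) : dks ω k ∣ dks ω (k - 1) :=
  Finset.gcd_mono (Finset.range_subset_range.mpr (by omega))

lemma alphaK_pos (h0 : ω 0 ≠ 0) (k : ℕ) : 0 < alphaK ω k :=
  Nat.div_pos (Nat.le_of_dvd (dks_pos h0 _) (dks_dvd_dks_pred k)) (dks_pos h0 k)

variable (ω) in
def keyDeg (k : ℕ) : ℕ := ∏ j ∈ Finset.Ico 1 k, alphaK ω j

lemma keyDeg_one : keyDeg ω 1 = 1 := by simp [keyDeg]

lemma keyDeg_succ {k : ℕ} (hk : 1 ≤ k) : keyDeg ω (k + 1) = keyDeg ω k * alphaK ω k :=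
  Finset.prod_Ico_succ_top hk _

lemma keyDeg_pos (h0 : ω 0 ≠ 0) (k : ℕ) : 0 < keyDeg ω k :=
  Finset.prod_pos fun j _ => alphaK_pos h0 j

lemma keyDeg_succ_eq_prod (m : ℕ) :
    keyDeg ω (m + 1) = ∏ j : Fin m, alphaK ω (j + 1) := by
  rw [keyDeg, Finset.prod_Ico_eq_prod_range, Fin.prod_univ_eq_prod_range (fun j => alphaK ω (j + 1))]
  simp only [Nat.add_sub_cancel, add_comm 1]

lemma sum_mul_keyDeg_lt {k : ℕ} (hk : 1 ≤ k) (f : ℕ → ℕ)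
    (hf : ∀ j ∈ Finset.Ico 1 k, f j < alphaK ω j) :
    ∑ j ∈ Finset.Ico 1 k, f j * keyDeg ω j < keyDeg ω k := by
  induction k, hk using Nat.le_induction with
  | base => simp [keyDeg_one]
  | succ k hk ih =>
    have hfk : f k + 1 ≤ alphaK ω k := hf k (by simp [hk])
    have ih' := ih fun j hj => hf j (Finset.Ico_subset_Ico_right k.le_succ hj)
    rw [Finset.sum_Ico_succ_top hk, keyDeg_succ hk]
    nlinarith

/-- The exponents `(β₁, …, β_n, β_{n+1})` of an element of `𝓑` besides its power of `x`;
`j : Fin n` indexes `β_{j+1}`. -/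
abbrev KeyExp (n : ℕ) (ω : ℕ → ℤ) : Type := ((j : Fin n) → Fin (alphaK ω (j + 1))) × ℕ

variable (n ω) in
def keyExpDeg (q : KeyExp n ω) : ℕ :=
  ∑ j : Fin n, (q.1 j : ℕ) * keyDeg ω (j + 1) + q.2 * keyDeg ω (n + 1)

lemma keyExpDeg_bijective (h0 : ω 0 ≠ 0) : (keyExpDeg n ω).Bijective := by
  have : NeZero (keyDeg ω (n + 1)) := ⟨(keyDeg_pos h0 _).ne'⟩
  let E : KeyExp n ω ≃ ℕ :=
    (finPiFinEquiv.trans (finCongr (keyDeg_succ_eq_prod n).symm)).prodCongr (Equiv.refl ℕ)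
      |>.trans (Equiv.prodComm _ _) |>.trans (Nat.divModEquiv _).symm
  have hE : keyExpDeg n ω = E := by
    funext q
    simp [E, keyExpDeg, Nat.divModEquiv, finPiFinEquiv_apply, keyDeg_succ_eq_prod, add_comm]
  exact hE ▸ E.bijective

end KeySequence

section KeyForms

variable {n : ℕ} {ω : ℕ → ℤ} {θ : ℕ → ℂ} {β : ℕ → ℕ → ℤ} {g : ℕ → RR}

lemma natDegree_keyForm_tail_lt (hβ : IsRepTuple n ω β) {k : ℕ} (hk : 1 ≤ k) (hkn : k ≤ n)
    (hg : ∀ j ∈ Finset.Ico 1 k, (g j).natDegree = keyDeg ω j) (c : LaurentPolynomial ℂ) :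
    (Polynomial.C c * ∏ j ∈ Finset.Ico 1 k, g j ^ (β k j).toNat).natDegree < keyDeg ω k := calc
  _ ≤ ∑ j ∈ Finset.Ico 1 k, (β k j).toNat * keyDeg ω j := by
    refine (natDegree_C_mul_le _ _).trans <| (natDegree_prod_le _ _).trans <|
      Finset.sum_le_sum fun j hj => ?_
    exact natDegree_pow_le.trans_eq (by rw [hg j hj])
  _ < keyDeg ω k := sum_mul_keyDeg_lt hk _ fun j hj => by
    have := (hβ k hk hkn).1 j (Finset.mem_Ico.mp hj).1 (Finset.mem_Ico.mp hj).2
    omega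

lemma keyForm_monic_natDegree (h0 : ω 0 ≠ 0) (hβ : IsRepTuple n ω β)
    (hg : KeyForms n ω θ β g) {k : ℕ} (hk : 1 ≤ k) (hkn : k ≤ n + 1) :
    (g k).Monic ∧ (g k).natDegree = keyDeg ω k := by
  induction k using Nat.strong_induction_on with
  | _ k ih =>
  obtain rfl | ⟨k, rfl, hk1⟩ : k = 1 ∨ ∃ k', k = k' + 1 ∧ 1 ≤ k' := by
    rcases eq_or_lt_of_le hk with h | h
    · exact .inl h.symm
    · exact .inr ⟨k - 1, by omega, by omega⟩
  · rw [hg.2.1, keyDeg_one]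
    exact ⟨monic_X, natDegree_X⟩
  obtain ⟨hmon, hdeg⟩ := ih k k.lt_succ_self hk1 (by omega)
  have hpow : (g k ^ alphaK ω k).natDegree = keyDeg ω (k + 1) := by
    rw [hmon.natDegree_pow, hdeg, keyDeg_succ hk1, mul_comm]
  have htail := natDegree_keyForm_tail_lt hβ hk1 (by omega)
    (fun j hj => have hj := Finset.mem_Ico.mp hj; (ih j (by omega) hj.1 (by omega)).2)
    (LaurentPolynomial.C (θ k) * T (β k 0))
  have hlt : keyDeg ω k ≤ keyDeg ω (k + 1) := by
    rw [keyDeg_succ hk1]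
    exact Nat.le_mul_of_pos_right _ (alphaK_pos h0 k)
  rw [hg.2.2 k hk1 (by omega)]
  refine ⟨(hmon.pow _).sub_of_left (degree_lt_degree (by omega)), ?_⟩
  rw [natDegree_sub_eq_left_of_natDegree_lt (by omega), hpow]

end KeyForms

section KeyMonomials

variable {n : ℕ} {ω : ℕ → ℤ}

noncomputable def keyMonomial {S : Type*} [CommSemiring S] (n : ℕ) (ω : ℕ → ℤ) (g : ℕ → S[X])
    (q : KeyExp n ω) : S[X] :=
  (∏ j : Fin n, g (j + 1) ^ (q.1 j : ℕ)) * g (n + 1) ^ q.2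

lemma keyMonomial_monic_natDegree {S : Type*} [CommSemiring S] {g : ℕ → S[X]}
    (hg : ∀ k, 1 ≤ k → k ≤ n + 1 → (g k).Monic ∧ (g k).natDegree = keyDeg ω k)
    (q : KeyExp n ω) :
    (keyMonomial n ω g q).Monic ∧ (keyMonomial n ω g q).natDegree = keyExpDeg n ω q := by
  have hj (j : Fin n) := hg (j + 1) (by omega) (by omega)
  have hlast := hg (n + 1) (by omega) le_rfl
  have hprod : (∏ j : Fin n, g (j + 1) ^ (q.1 j : ℕ)).Monic :=
    monic_prod_of_monic _ _ fun j _ => (hj j).1.pow _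
  refine ⟨hprod.mul (hlast.1.pow _), ?_⟩
  rw [keyMonomial, hprod.natDegree_mul (hlast.1.pow _), natDegree_prod_of_monic _ _
    fun j _ => (hj j).1.pow _, hlast.1.natDegree_pow, hlast.2, keyExpDeg]
  congr 1
  exact Finset.sum_congr rfl fun j _ => by rw [(hj j).1.natDegree_pow, (hj j).2]

lemma map_keyMonomial {S S' : Type*} [CommSemiring S] [CommSemiring S'] (f : S →+* S')
    {g : ℕ → S[X]} {g' : ℕ → S'[X]} (hg : ∀ j, j ≤ n + 1 → (g j).map f = g' j)
    (q : KeyExp n ω) :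
    (keyMonomial n ω g q).map f = keyMonomial n ω g' q := by
  simp only [keyMonomial, Polynomial.map_mul, Polynomial.map_prod, Polynomial.map_pow,
    hg _ le_rfl, fun j : Fin n => hg (j + 1) (by omega)]

lemma Bfam_eq_smul_keyMonomial (g : ℕ → RR) (p : ℤ × KeyExp n ω) :
    Bfam n ω g p = (T p.1 : LaurentPolynomial ℂ) • keyMonomial n ω g p.2 := by
  rw [Polynomial.smul_eq_C_mul, Bfam, keyMonomial, mul_assoc]

lemma linearIndependent_Bfam (h0 : ω 0 ≠ 0) {g : ℕ → RR}
    (hg : ∀ k, 1 ≤ k → k ≤ n + 1 → (g k).Monic ∧ (g k).natDegree = keyDeg ω k) :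
    LinearIndependent ℂ (Bfam n ω g) := by
  let b := (AddMonoidAlgebra.basis ℤ ℂ).smulTower <| basisOfMonic (keyMonomial n ω g)
    (keyExpDeg_bijective h0) (fun q => (keyMonomial_monic_natDegree hg q).1)
    (fun q => (keyMonomial_monic_natDegree hg q).2)
  have hb : Bfam n ω g = b := by
    funext p
    rw [Bfam_eq_smul_keyMonomial, Module.Basis.smulTower_apply, basisOfMonic_apply]
    rfl
  exact hb ▸ b.linearIndependent

end KeyMonomials

lemma adjoin_C_T_one_X_le_range_mapAlgHom {R : Type*} [CommSemiring R] :
    Algebra.adjoin R {Polynomial.C (T 1), X} ≤ (mapAlgHom (toLaurentAlg (R := R))).range := by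
  refine Algebra.adjoin_le ?_
  rintro _ (rfl | rfl)
  · exact ⟨Polynomial.C Polynomial.X, by simp⟩
  · exact ⟨X, by simp⟩

section Span

variable {n : ℕ} {ω : ℕ → ℤ} {g : ℕ → RR}

lemma Bfam_natCast_mem {A : Subalgebra ℂ RR}
    (hA : A = Algebra.adjoin ℂ ({Polynomial.C (T 1), X} : Set RR))
    (hpoly : ∀ j, j ≤ n + 1 → g j ∈ A) (a : ℕ) (q : KeyExp n ω) :
    Bfam n ω g (a, q) ∈ A := by
  have hx : (Polynomial.C (T 1) : RR) ∈ A := hA ▸ Algebra.subset_adjoin (by simp)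
  rw [Bfam_eq_smul_keyMonomial, Polynomial.smul_eq_C_mul, ← mul_one (a : ℤ), ← T_pow, map_pow]
  refine mul_mem (pow_mem hx a) (mul_mem (prod_mem fun j _ => pow_mem (hpoly _ ?_) _)
    (pow_mem (hpoly _ le_rfl) _))
  omega

lemma toSubmodule_le_span_Bfam_inter (h0 : ω 0 ≠ 0) {A : Subalgebra ℂ RR}
    (hA : A = Algebra.adjoin ℂ ({Polynomial.C (T 1), X} : Set RR))
    (hg : ∀ k, 1 ≤ k → k ≤ n + 1 → (g k).Monic ∧ (g k).natDegree = keyDeg ω k)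
    (hpoly : ∀ j, j ≤ n + 1 → g j ∈ A) :
    Subalgebra.toSubmodule A ≤ Submodule.span ℂ (Set.range (Bfam n ω g) ∩ A) := by
  let ι := mapAlgHom (toLaurentAlg (R := ℂ))
  have hAι : A ≤ ι.range := hA ▸ adjoin_C_T_one_X_le_range_mapAlgHom
  have hlift (h : RR) (hh : h ∈ A) : ∃ h' : ℂ[X][X], ι h' = h := hAι hh
  choose! g' hg' using fun j hj => hlift _ (hpoly j hj)
  simp only [ι, coe_mapAlgHom] at hg'
  have hg'deg (k : ℕ) (hk : 1 ≤ k) (hkn : k ≤ n + 1) :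
      (g' k).Monic ∧ (g' k).natDegree = keyDeg ω k := by
    obtain ⟨hm, hd⟩ := hg k hk hkn
    rw [← hg' k hkn] at hm hd
    exact ⟨monic_of_injective toLaurent_injective hm,
      (natDegree_map_eq_of_injective toLaurent_injective _).symm.trans hd⟩
  let b := (basisMonomials ℂ).smulTower <| basisOfMonic (keyMonomial n ω g')
    (keyExpDeg_bijective h0) (fun q => (keyMonomial_monic_natDegree hg'deg q).1)
    (fun q => (keyMonomial_monic_natDegree hg'deg q).2)
  have hb (p : ℕ × KeyExp n ω) : ι (b p) = Bfam n ω g (p.1, p.2) := by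
    rw [Module.Basis.smulTower_apply, basisOfMonic_apply, coe_basisMonomials,
      Polynomial.smul_eq_C_mul, map_mul, Bfam_eq_smul_keyMonomial, Polynomial.smul_eq_C_mul]
    simp [ι, map_keyMonomial _ hg', toLaurent_C_mul_T]
  intro h hh
  obtain ⟨h', rfl⟩ := hAι hh
  have hspan := Submodule.mem_map_of_mem (f := ι.toLinearMap)
    (b.span_eq ▸ Submodule.mem_top : h' ∈ Submodule.span ℂ (Set.range b))
  rw [Submodule.map_span] at hspan
  refine Submodule.span_mono ?_ hspan
  rintro _ ⟨_, ⟨p, rfl⟩, rfl⟩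
  exact ⟨⟨_, (hb p).symm⟩, hb p ▸ Bfam_natCast_mem hA hpoly p.1 p.2⟩

end Span

theorem stmt3_general (n : ℕ) (ω : ℕ → ℤ) (θ : ℕ → ℂ) (β : ℕ → ℕ → ℤ) (g : ℕ → RR)
    (hω : IsKeySequence n ω)
    (hβ : IsRepTuple n ω β) (hg : KeyForms n ω θ β g)
    (A : Subalgebra ℂ RR)
    (hA : A = Algebra.adjoin ℂ
      ({Polynomial.C (LaurentPolynomial.T 1), Polynomial.X} : Set RR))
    (hpoly : ∀ j, j ≤ n + 1 → g j ∈ A) :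
    LinearIndependent ℂ
        (fun v : (Set.range (Bfam n ω g) ∩ (A : Set RR) : Set RR) => (v : RR)) ∧
      Submodule.span ℂ (Set.range (Bfam n ω g) ∩ (A : Set RR)) =
        Subalgebra.toSubmodule A := by
  have h0 : ω 0 ≠ 0 := by linarith [hω.1]
  have hdeg (k : ℕ) (hk : 1 ≤ k) (hkn : k ≤ n + 1) := keyForm_monic_natDegree h0 hβ hg hk hkn
  refine ⟨(linearIndependent_Bfam h0 hdeg).linearIndepOn_id.mono Set.inter_subset_left, ?_⟩
  exact le_antisymm (Submodule.span_le.mpr fun _ hx => hx.2)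
    (toSubmodule_le_span_Bfam_inter h0 hA hdeg hpoly)

/-- If every key form lies in the polynomial subring `ℂ[x,y] ⊆ ℂ[x,x⁻¹,y]`
(the `ℂ`-subalgebra generated by `x` and `y`), then `𝓑 ∩ ℂ[x,y]` is a
`ℂ`-vector-space basis of `ℂ[x,y]`. -/
theorem stmt3 (n : ℕ) (ω : ℕ → ℤ) (θ : ℕ → ℂ) (β : ℕ → ℕ → ℤ) (g : ℕ → RR)
    (hω : IsKeySequence n ω) (hθ : ∀ k, 1 ≤ k → k ≤ n → θ k ≠ 0)
    (hβ : IsRepTuple n ω β) (hg : KeyForms n ω θ β g)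
    (A : Subalgebra ℂ RR)
    (hA : A = Algebra.adjoin ℂ
      ({Polynomial.C (LaurentPolynomial.T 1), Polynomial.X} : Set RR))
    (hpoly : ∀ j, j ≤ n + 1 → g j ∈ A) :
    LinearIndependent ℂ
        (fun v : (Set.range (Bfam n ω g) ∩ (A : Set RR) : Set RR) => (v : RR)) ∧
      Submodule.span ℂ (Set.range (Bfam n ω g) ∩ (A : Set RR)) =
        Subalgebra.toSubmodule A :=
  stmt3_general n ω θ β g hω hβ hg A hA hpoly
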